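/- Commuting K-theoretic switch operators: if i ≠ j and r ≠ s, then the switch operators (i̲, r) and (j̲, s) acting on tableaux (with underlined entries i̲, j̲ treated as distinct symbols from the non-underlined entries r, s) commute: (i̲,r)(j̲,s)T = (j̲,s)(i̲,r)T for every tableau T. -/
import Mathlib


/-- Two boxes (row, column) are adjacent if they share a common edge. -/
def adjBox (p q : ℕ × ℕ) : Prop :=
  (p.1 = q.1 ∧ (p.2 = q.2 + 1 ∨ q.2 = p.2 + 1)) ∨
  (p.2 = q.2 ∧ (p.1 = q.1 + 1 ∨ q.1 = p.1 + 1))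

/- Labels: `Sum.inl i` is the underlined symbol `i̲`, `Sum.inr r` is the
ordinary symbol `r`; these two alphabets are disjoint. A tableau is a partial
labeling of boxes. -/
open Classical in
/-- The K-theoretic switch operator `(a, b)`: every box labeled `a` adjacent to
a box labeled `b` gets relabeled `b`, and vice versa; other boxes unchanged. -/
noncomputable def switchOp (a b : ℕ ⊕ ℕ) (T : ℕ × ℕ → Option (ℕ ⊕ ℕ)) :
    ℕ × ℕ → Option (ℕ ⊕ ℕ) := fun p =>
  if T p = some a ∧ ∃ q, adjBox p q ∧ T q = some b then some b
  else if T p = some b ∧ ∃ q, adjBox p q ∧ T q = some a then some a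
  else T p

lemma switchOp_eq_iff (a b c : ℕ ⊕ ℕ) (hca : c ≠ a) (hcb : c ≠ b)
    (T : ℕ × ℕ → Option (ℕ ⊕ ℕ)) (p : ℕ × ℕ) :
    switchOp a b T p = some c ↔ T p = some c := by
  unfold switchOp
  split_ifs with h1 h2
  · simp [h1.1, hca.symm, hcb.symm]
  · simp [h2.1, hca.symm, hcb.symm]
  · rfl

open Classical in
lemma switchOp_comm (a b a' b' : ℕ ⊕ ℕ)
    (h1 : a ≠ a') (h2 : a ≠ b') (h3 : b ≠ a') (h4 : b ≠ b')
    (T : ℕ × ℕ → Option (ℕ ⊕ ℕ)) :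
    switchOp a b (switchOp a' b' T) = switchOp a' b' (switchOp a b T) := by
  funext p
  have key : ∀ (x y x' y' : ℕ ⊕ ℕ), x ≠ x' → x ≠ y' → y ≠ x' → y ≠ y' →
      switchOp x y (switchOp x' y' T) p =
      (if T p = some x ∧ ∃ q, adjBox p q ∧ T q = some y then some y
       else if T p = some y ∧ ∃ q, adjBox p q ∧ T q = some x then some x
       else switchOp x' y' T p) := by
    intro x y x' y' g1 g2 g3 g4
    conv_lhs => rw [switchOp]
    simp only [switchOp_eq_iff x' y' x g1 g2 T,
      switchOp_eq_iff x' y' y g3 g4 T]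
  rw [key a b a' b' h1 h2 h3 h4, key a' b' a b h1.symm h3.symm h2.symm h4.symm]
  simp only [switchOp]
  split_ifs <;> first
    | rfl
    | (exfalso; (simp_all only [ne_eq, Option.some.injEq]; tauto))

/-- if `i ≠ j` and `r ≠ s`, the switch operators `(i̲, r)` and
`(j̲, s)` commute. -/
theorem stmt10 (i r j s : ℕ) (hij : i ≠ j) (hrs : r ≠ s)
    (T : ℕ × ℕ → Option (ℕ ⊕ ℕ)) :
    switchOp (Sum.inl i) (Sum.inr r) (switchOp (Sum.inl j) (Sum.inr s) T) =
      switchOp (Sum.inl j) (Sum.inr s) (switchOp (Sum.inl i) (Sum.inr r) T) := by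
  exact switchOp_comm _ _ _ _ (by simp [hij]) (by simp) (by simp)
    (by simp [hrs]) T
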